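/- Let d ≥ 1 and 0 < σ < 2/d. The function h(λ) = inf{H[u] : ‖u‖_{l²}² = λ} is strictly sublinear: for every λ > 0 and α ∈ (0, λ), h(λ) < h(α) + h(λ - α). -/

import Mathlib

/-- The nearest-neighbor (edge) sum `∑_{n}∑_{j:|j-n|=1} |u_j - u_n|² = ⟨-Δ_disc u, u⟩`. -/
noncomputable def edgeSum (d : ℕ) (u : (Fin d → ℤ) → ℂ) : ℝ :=
  ∑' n : Fin d → ℤ, ∑ i : Fin d,
    (‖u (n + Pi.single i 1) - u n‖ ^ 2 + ‖u (n - Pi.single i 1) - u n‖ ^ 2)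

/-- The DNLS Hamiltonian `H[u] = ∑_{n,j:|j-n|=1}|u_j-u_n|² - (1/(σ+1)) ∑_n |u_n|^{2σ+2}`. -/
noncomputable def dnlsH (d : ℕ) (σ : ℝ) (u : (Fin d → ℤ) → ℂ) : ℝ :=
  edgeSum d u - (1 / (σ + 1)) * ∑' n : Fin d → ℤ, ‖u n‖ ^ (2 * σ + 2)

/-- `h(λ) = inf { H[u] : u ∈ l²(ℤ^d), ∑_n |u_n|² = λ }`. -/
noncomputable def hInf (d : ℕ) (σ : ℝ) (lam : ℝ) : ℝ :=
  sInf {x : ℝ | ∃ u : (Fin d → ℤ) → ℂ, Summable (fun n => ‖u n‖ ^ 2) ∧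
    (∑' n : Fin d → ℤ, ‖u n‖ ^ 2) = lam ∧ x = dnlsH d σ u}


open scoped ENNReal

lemma geomZ_summable {ρ : ℝ} (h0 : 0 ≤ ρ) (h1 : ρ < 1) :
    Summable (fun k : ℤ => ρ ^ k.natAbs) := by
  apply Summable.of_nat_of_neg_add_one
  · simpa using summable_geometric_of_lt_one h0 h1
  · have : (fun n : ℕ => ρ ^ (-(n+1) : ℤ).natAbs) = fun n : ℕ => ρ * ρ ^ n := by
      funext n
      have : ((-(n+1) : ℤ)).natAbs = n + 1 := by omega
      rw [this, pow_succ]; ring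
    rw [this]
    exact (summable_geometric_of_lt_one h0 h1).mul_left ρ

lemma geomZ_tsum {ρ : ℝ} (h0 : 0 ≤ ρ) (h1 : ρ < 1) :
    ∑' k : ℤ, ρ ^ k.natAbs = (1 + ρ) / (1 - ρ) := by
  have hgeom := summable_geometric_of_lt_one h0 h1
  have h2 : (fun n : ℕ => ρ ^ (-(n+1) : ℤ).natAbs) = fun n : ℕ => ρ * ρ ^ n := by
    funext n
    have : ((-(n+1) : ℤ)).natAbs = n + 1 := by omega
    rw [this, pow_succ]; ring
  rw [tsum_of_nat_of_neg_add_one (by simpa using hgeom) (by rw [h2]; exact hgeom.mul_left ρ)]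
  simp only [Int.natAbs_natCast]
  rw [h2, tsum_mul_left, tsum_geometric_of_lt_one h0 h1]
  have : (1:ℝ) - ρ ≠ 0 := by linarith
  field_simp


open scoped ENNReal

lemma bridge {ι : Type*} {f : ι → ℝ} (hf : ∀ i, 0 ≤ f i)
    (h : ∑' i, ENNReal.ofReal (f i) ≠ ⊤) :
    Summable f ∧ (∑' i, f i) = (∑' i, ENNReal.ofReal (f i)).toReal := by
  have hs : Summable f := by
    have := ENNReal.summable_toReal h
    simpa [ENNReal.toReal_ofReal (hf _)] using this
  refine ⟨hs, ?_⟩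
  rw [← ENNReal.ofReal_tsum_of_nonneg hf hs, ENNReal.toReal_ofReal (tsum_nonneg hf)]

lemma tsum_pi_fin : ∀ {d : ℕ} (f : Fin d → ℤ → ℝ≥0∞),
    ∑' n : Fin d → ℤ, ∏ i, f i (n i) = ∏ i, ∑' k : ℤ, f i k := by
  intro d
  induction d with
  | zero =>
    intro f
    simp only [Finset.univ_eq_empty, Finset.prod_empty]
    exact tsum_eq_single default (fun b hb => absurd (Subsingleton.elim b default) hb)
  | succ d ih =>
    intro f
    rw [← (Fin.consEquiv (fun _ => ℤ)).tsum_eq]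
    have h1 : ∀ p : ℤ × (Fin d → ℤ),
        (∏ i, f i ((Fin.consEquiv (fun _ => ℤ) p) i)) = f 0 p.1 * ∏ i : Fin d, f i.succ (p.2 i) := by
      intro p
      rw [Fin.prod_univ_succ]
      simp [Fin.consEquiv]
    simp_rw [h1]
    rw [ENNReal.tsum_prod']
    simp_rw [ENNReal.tsum_mul_left]
    rw [ENNReal.tsum_mul_right, ih, Fin.prod_univ_succ]

lemma tsum_pi_real {d : ℕ} (f : Fin d → ℤ → ℝ) (hf : ∀ i k, 0 ≤ f i k)
    (hs : ∀ i, Summable (f i)) :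
    Summable (fun n : Fin d → ℤ => ∏ i, f i (n i)) ∧
    (∑' n : Fin d → ℤ, ∏ i, f i (n i)) = ∏ i, ∑' k : ℤ, f i k := by
  have hnn : ∀ n : Fin d → ℤ, 0 ≤ ∏ i, f i (n i) := fun n =>
    Finset.prod_nonneg fun i _ => hf i (n i)
  have hE : ∑' n : Fin d → ℤ, ENNReal.ofReal (∏ i, f i (n i))
      = ENNReal.ofReal (∏ i, ∑' k : ℤ, f i k) := by
    have h1 : ∀ n : Fin d → ℤ, ENNReal.ofReal (∏ i, f i (n i))
        = ∏ i, ENNReal.ofReal (f i (n i)) := fun n =>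
      ENNReal.ofReal_prod_of_nonneg fun i _ => hf i (n i)
    simp_rw [h1]
    rw [tsum_pi_fin (fun i k => ENNReal.ofReal (f i k))]
    rw [ENNReal.ofReal_prod_of_nonneg fun i _ => tsum_nonneg fun k => hf i k]
    congr 1
    funext i
    exact (ENNReal.ofReal_tsum_of_nonneg (hf i) (hs i)).symm
  have hne : ∑' n : Fin d → ℤ, ENNReal.ofReal (∏ i, f i (n i)) ≠ ⊤ := by
    rw [hE]; exact ENNReal.ofReal_ne_top
  obtain ⟨hsum, hval⟩ := bridge hnn hne
  refine ⟨hsum, ?_⟩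
  rw [hval, hE, ENNReal.toReal_ofReal (Finset.prod_nonneg fun i _ => tsum_nonneg fun k => hf i k)]


lemma edgeSum_nonneg (d : ℕ) (u : (Fin d → ℤ) → ℂ) : 0 ≤ edgeSum d u :=
  tsum_nonneg fun n => Finset.sum_nonneg fun i _ =>
    add_nonneg (sq_nonneg _) (sq_nonneg _)

lemma pot_term_eq (σ : ℝ) (hσ0 : 0 < σ) (x : ℝ) (hx : 0 ≤ x) :
    x ^ (2 * σ + 2) = (x ^ 2) ^ σ * x ^ 2 := by
  have h2 : (x:ℝ) ^ (2:ℝ) = x ^ (2:ℕ) := by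
    rw [show ((2:ℝ) = ((2:ℕ):ℝ)) by norm_num, Real.rpow_natCast]
  rw [Real.rpow_add' hx (by nlinarith), ← h2, ← Real.rpow_mul hx, mul_comm (2:ℝ) σ,
    Real.rpow_mul hx, h2]

lemma pot_facts (d : ℕ) (σ : ℝ) (hσ0 : 0 < σ) (u : (Fin d → ℤ) → ℂ)
    (hs : Summable fun n => ‖u n‖ ^ 2) :
    Summable (fun n => ‖u n‖ ^ (2 * σ + 2)) ∧
    ∑' n, ‖u n‖ ^ (2 * σ + 2) ≤
      (∑' n, ‖u n‖ ^ 2) ^ σ * (∑' n, ‖u n‖ ^ 2) := by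
  set L : ℝ := ∑' n, ‖u n‖ ^ 2 with hL
  have hterm : ∀ n, ‖u n‖ ^ (2 * σ + 2) ≤ L ^ σ * ‖u n‖ ^ 2 := by
    intro n
    rw [pot_term_eq σ hσ0 _ (norm_nonneg _)]
    have h1 : ‖u n‖ ^ 2 ≤ L := Summable.le_tsum hs n fun _ _ => sq_nonneg _
    exact mul_le_mul_of_nonneg_right
      (Real.rpow_le_rpow (sq_nonneg _) h1 hσ0.le) (sq_nonneg _)
  have hsum2 : Summable fun n => L ^ σ * ‖u n‖ ^ 2 := hs.mul_left _
  have hpotsum : Summable fun n => ‖u n‖ ^ (2 * σ + 2) :=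
    Summable.of_nonneg_of_le (fun n => Real.rpow_nonneg (norm_nonneg _) _) hterm hsum2
  refine ⟨hpotsum, ?_⟩
  calc ∑' n, ‖u n‖ ^ (2 * σ + 2) ≤ ∑' n, L ^ σ * ‖u n‖ ^ 2 :=
        Summable.tsum_le_tsum hterm hpotsum hsum2
    _ = L ^ σ * L := by rw [tsum_mul_left]

lemma dnlsH_lower (d : ℕ) (σ : ℝ) (hσ0 : 0 < σ) (u : (Fin d → ℤ) → ℂ)
    (hs : Summable fun n => ‖u n‖ ^ 2) :
    -((1 / (σ + 1)) * ((∑' n, ‖u n‖ ^ 2) ^ σ * (∑' n, ‖u n‖ ^ 2))) ≤ dnlsH d σ u := by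
  have h1 := (pot_facts d σ hσ0 u hs).2
  have h2 := edgeSum_nonneg d u
  have h3 : (0:ℝ) < 1 / (σ + 1) := by positivity
  unfold dnlsH
  nlinarith [mul_le_mul_of_nonneg_left h1 h3.le]

lemma bddBelow_Hset (d : ℕ) (σ : ℝ) (hσ0 : 0 < σ) (lam : ℝ) :
    BddBelow {x : ℝ | ∃ u : (Fin d → ℤ) → ℂ, Summable (fun n => ‖u n‖ ^ 2) ∧
      (∑' n : Fin d → ℤ, ‖u n‖ ^ 2) = lam ∧ x = dnlsH d σ u} := by
  refine ⟨-((1 / (σ + 1)) * (lam ^ σ * lam)), ?_⟩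
  rintro x ⟨u, hs, hm, rfl⟩
  have := dnlsH_lower d σ hσ0 u hs
  rwa [hm] at this

lemma Hset_nonempty (d : ℕ) (σ : ℝ) (lam : ℝ) (hlam : 0 ≤ lam) :
    ∃ x : ℝ, x ∈ {x : ℝ | ∃ u : (Fin d → ℤ) → ℂ, Summable (fun n => ‖u n‖ ^ 2) ∧
      (∑' n : Fin d → ℤ, ‖u n‖ ^ 2) = lam ∧ x = dnlsH d σ u} := by
  set u : (Fin d → ℤ) → ℂ := fun n => if n = 0 then (Real.sqrt lam : ℂ) else 0 with hu
  have hnorm : (fun n => ‖u n‖ ^ 2) = fun n : Fin d → ℤ => if n = 0 then lam else 0 := by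
    funext n
    by_cases h : n = 0 <;> simp [hu, h, Complex.norm_real,
      abs_of_nonneg (Real.sqrt_nonneg lam), Real.sq_sqrt hlam]
  have hsum : Summable fun n => ‖u n‖ ^ 2 := by
    rw [hnorm]
    exact summable_of_ne_finset_zero (s := {(0 : Fin d → ℤ)}) (by intro b hb; simp at hb; simp [hb])
  refine ⟨dnlsH d σ u, u, hsum, ?_, rfl⟩
  rw [hnorm, tsum_eq_single (0 : Fin d → ℤ) (fun b hb => by simp [hb])]
  simp

lemma norm_smul_c (t : ℝ) (ht : 0 ≤ t) (z : ℂ) : ‖(t:ℂ) * z‖ = t * ‖z‖ := by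
  rw [norm_mul, Complex.norm_real, Real.norm_eq_abs, abs_of_nonneg ht]

lemma dnlsH_scale (d : ℕ) (σ : ℝ) (hσ0 : 0 < σ) (u : (Fin d → ℤ) → ℂ)
    (t : ℝ) (ht : 1 ≤ t) :
    dnlsH d σ (fun n => (t:ℂ) * u n) ≤ t ^ (2 * σ + 2) * dnlsH d σ u := by
  have ht0 : (0:ℝ) ≤ t := le_trans zero_le_one ht
  set v : (Fin d → ℤ) → ℂ := fun n => (t:ℂ) * u n with hv
  have hedge : edgeSum d v = t ^ 2 * edgeSum d u := by
    unfold edgeSum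
    rw [← tsum_mul_left]
    congr 1; funext n
    rw [Finset.mul_sum]
    congr 1; funext i
    have h1 : v (n + Pi.single i 1) - v n = (t:ℂ) * (u (n + Pi.single i 1) - u n) := by
      simp [hv]; ring
    have h2 : v (n - Pi.single i 1) - v n = (t:ℂ) * (u (n - Pi.single i 1) - u n) := by
      simp [hv]; ring
    rw [h1, h2, norm_smul_c t ht0, norm_smul_c t ht0]
    ring
  have hpot : ∑' n, ‖v n‖ ^ (2 * σ + 2) = t ^ (2 * σ + 2) * ∑' n, ‖u n‖ ^ (2 * σ + 2) := by
    rw [← tsum_mul_left]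
    congr 1; funext n
    rw [norm_smul_c t ht0 (u n), Real.mul_rpow ht0 (norm_nonneg _)]
  have hE : 0 ≤ edgeSum d u := edgeSum_nonneg d u
  have ht2 : t ^ (2:ℕ) ≤ t ^ (2 * σ + 2) := by
    have h2 : (t:ℝ) ^ ((2:ℕ):ℝ) = t ^ (2:ℕ) := Real.rpow_natCast t 2
    calc t ^ (2:ℕ) = t ^ ((2:ℕ):ℝ) := h2.symm
      _ ≤ t ^ (2 * σ + 2) := Real.rpow_le_rpow_of_exponent_le ht (by push_cast; nlinarith)
  unfold dnlsH
  rw [hedge, hpot]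
  have := mul_le_mul_of_nonneg_right ht2 hE
  nlinarith

lemma mass_scale (d : ℕ) (u : (Fin d → ℤ) → ℂ) (hs : Summable fun n => ‖u n‖ ^ 2)
    (t : ℝ) (ht0 : 0 ≤ t) :
    Summable (fun n => ‖(t:ℂ) * u n‖ ^ 2) ∧
    (∑' n, ‖(t:ℂ) * u n‖ ^ 2) = t ^ 2 * ∑' n, ‖u n‖ ^ 2 := by
  have h : (fun n : Fin d → ℤ => ‖(t:ℂ) * u n‖ ^ 2) = fun n => t ^ 2 * ‖u n‖ ^ 2 := by
    funext n; rw [norm_smul_c t ht0]; ring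
  rw [h]
  exact ⟨hs.mul_left _, tsum_mul_left⟩

lemma hInf_le_scale (d : ℕ) (σ : ℝ) (hσ0 : 0 < σ) {β lam : ℝ}
    (hβ : 0 < β) (hlt : β < lam) :
    hInf d σ lam ≤ (lam / β) ^ (σ + 1) * hInf d σ β := by
  set s : ℝ := lam / β with hsdef
  have hs1 : 1 < s := (one_lt_div hβ).2 hlt
  have hs0 : (0:ℝ) ≤ s := by linarith
  set t : ℝ := Real.sqrt s with htdef
  have ht1 : 1 ≤ t := by
    rw [htdef, show (1:ℝ) = Real.sqrt 1 by simp]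
    exact Real.sqrt_le_sqrt hs1.le
  have ht2 : t ^ 2 = s := Real.sq_sqrt hs0
  have htq : t ^ (2 * σ + 2) = s ^ (σ + 1) := by
    rw [htdef, Real.sqrt_eq_rpow, ← Real.rpow_mul hs0]
    congr 1; ring
  have hc : (0:ℝ) < s ^ (σ + 1) := Real.rpow_pos_of_pos (by linarith) _
  -- every element of set β produces bound
  have key : ∀ x ∈ {x : ℝ | ∃ u : (Fin d → ℤ) → ℂ, Summable (fun n => ‖u n‖ ^ 2) ∧
      (∑' n : Fin d → ℤ, ‖u n‖ ^ 2) = β ∧ x = dnlsH d σ u},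
      hInf d σ lam / s ^ (σ + 1) ≤ x := by
    rintro x ⟨u, hsum, hmass, rfl⟩
    have h1 := mass_scale d u hsum t (by linarith)
    have hm : (∑' n, ‖(t:ℂ) * u n‖ ^ 2) = lam := by
      rw [h1.2, hmass, ht2, hsdef]; field_simp
    have hmem : dnlsH d σ (fun n => (t:ℂ) * u n) ∈ {x : ℝ | ∃ u : (Fin d → ℤ) → ℂ,
        Summable (fun n => ‖u n‖ ^ 2) ∧ (∑' n : Fin d → ℤ, ‖u n‖ ^ 2) = lam ∧ x = dnlsH d σ u} :=
      ⟨_, h1.1, hm, rfl⟩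
    have hle : hInf d σ lam ≤ dnlsH d σ (fun n => (t:ℂ) * u n) :=
      csInf_le (bddBelow_Hset d σ hσ0 lam) hmem
    have := dnlsH_scale d σ hσ0 u t ht1
    rw [htq] at this
    rw [div_le_iff₀ hc, mul_comm]
    linarith
  have hne := Hset_nonempty d σ β hβ.le
  have : hInf d σ lam / s ^ (σ + 1) ≤ hInf d σ β := le_csInf hne key
  rw [div_le_iff₀ hc] at this
  linarith [this]


noncomputable def wgeo (r : ℝ) : ℤ → ℝ := fun k => r ^ k.natAbs

lemma wgeo_pos {r : ℝ} (hr : 0 < r) (k : ℤ) : 0 < wgeo r k := pow_pos hr _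

lemma wgeo_sq (r : ℝ) (k : ℤ) : wgeo r k ^ 2 = (r ^ 2) ^ k.natAbs := by
  show (r ^ k.natAbs) ^ 2 = _
  rw [← pow_mul, mul_comm, pow_mul]

lemma wgeo_rpow {r : ℝ} (hr : 0 ≤ r) (q : ℝ) (k : ℤ) :
    wgeo r k ^ q = (r ^ q) ^ k.natAbs := by
  show (r ^ k.natAbs) ^ q = _
  rw [← Real.rpow_natCast_mul hr k.natAbs q, mul_comm ((k.natAbs : ℝ)) q,
    Real.rpow_mul_natCast hr q k.natAbs]

lemma wgeo_succ_nonneg {r : ℝ} {k : ℤ} (hk : 0 ≤ k) : wgeo r (k + 1) = wgeo r k * r := by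
  show r ^ (k+1).natAbs = r ^ k.natAbs * r
  have hna : (k + 1).natAbs = k.natAbs + 1 := by omega
  rw [hna, pow_succ]

lemma wgeo_succ_neg {r : ℝ} (hr : 0 < r) {k : ℤ} (hk : k < 0) :
    wgeo r (k + 1) = wgeo r k / r := by
  have hna : k.natAbs = (k + 1).natAbs + 1 := by omega
  have : wgeo r k = wgeo r (k + 1) * r := by
    show r ^ k.natAbs = r ^ (k+1).natAbs * r
    rw [hna, pow_succ]
  rw [this]; field_simp

lemma wgeo_edge_bound {r : ℝ} (hr0 : 0 < r) (hr1 : r < 1) (k : ℤ) :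
    (wgeo r (k + 1) - wgeo r k) ^ 2 ≤ (1 - r) ^ 2 / r ^ 2 * wgeo r k ^ 2 := by
  have hrsq : (0:ℝ) < r ^ 2 := pow_pos hr0 2
  rcases le_or_gt 0 k with hk | hk
  · rw [wgeo_succ_nonneg hk]
    have key : (wgeo r k * r - wgeo r k) ^ 2 = wgeo r k ^ 2 * (1 - r) ^ 2 := by ring
    rw [key]
    have h1 : (1 - r) ^ 2 ≤ (1 - r) ^ 2 / r ^ 2 := by
      rw [le_div_iff₀ hrsq]
      nlinarith [mul_nonneg (sq_nonneg (1 - r)) (show (0:ℝ) ≤ 1 - r ^ 2 by nlinarith)]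
    nlinarith [mul_le_mul_of_nonneg_left h1 (sq_nonneg (wgeo r k))]
  · rw [wgeo_succ_neg hr0 hk]
    have key : (wgeo r k / r - wgeo r k) ^ 2 = (1 - r) ^ 2 / r ^ 2 * wgeo r k ^ 2 := by
      field_simp
    rw [key]

lemma trial_bound (d : ℕ) (hd : 1 ≤ d) (σ β r : ℝ) (hσ0 : 0 < σ) (hβ : 0 < β)
    (hr : 1/2 ≤ r) (hr1 : r < 1) :
    hInf d σ β ≤ 2 * d * β * ((1 - r) ^ 2 / r ^ 2)
      - (1 / (σ + 1)) * (β ^ (σ + 1) / (2 ^ ((d:ℝ) * (σ + 1)) * (2 * σ + 2) ^ d)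
          * (1 - r) ^ ((d:ℝ) * σ)) := by
  have hr0 : (0:ℝ) < r := by linarith
  have hε0 : (0:ℝ) < 1 - r := by linarith
  have hr20 : (0:ℝ) ≤ r ^ 2 := sq_nonneg r
  have hr21 : r ^ 2 < 1 := by nlinarith
  -- 1D mass sum
  have hS2sum : Summable fun k : ℤ => wgeo r k ^ 2 := by
    simp_rw [wgeo_sq]; exact geomZ_summable hr20 hr21
  set S2 : ℝ := (1 + r ^ 2) / (1 - r ^ 2) with hS2def
  have hS2val : ∑' k : ℤ, wgeo r k ^ 2 = S2 := by
    simp_rw [wgeo_sq]; exact geomZ_tsum hr20 hr21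
  have hS2one : 1 ≤ S2 := by
    rw [hS2def, le_div_iff₀ (by nlinarith)]; nlinarith
  have hS2pos : (0:ℝ) < S2 := lt_of_lt_of_le one_pos hS2one
  have hS2le : S2 ≤ 2 / (1 - r) := by
    rw [hS2def, div_le_div_iff₀ (by nlinarith) hε0]
    nlinarith
  -- 1D potential sum
  set q : ℝ := 2 * σ + 2 with hqdef
  have hq1 : (1:ℝ) ≤ q := by rw [hqdef]; linarith
  have hq0 : (0:ℝ) < q := by rw [hqdef]; linarith
  set ρq : ℝ := r ^ q with hρqdef
  have hρq0 : (0:ℝ) ≤ ρq := Real.rpow_nonneg hr0.le q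
  have hρq1 : ρq < 1 := Real.rpow_lt_one hr0.le hr1 (by linarith)
  have hSqsum : Summable fun k : ℤ => wgeo r k ^ q := by
    simp_rw [wgeo_rpow hr0.le q]; exact geomZ_summable hρq0 hρq1
  set Sq : ℝ := (1 + ρq) / (1 - ρq) with hSqdef
  have hSqval : ∑' k : ℤ, wgeo r k ^ q = Sq := by
    simp_rw [wgeo_rpow hr0.le q]; exact geomZ_tsum hρq0 hρq1
  have hρqpos : 0 < 1 - ρq := by linarith
  have hbern : 1 - ρq ≤ q * (1 - r) := by
    have hb := one_add_mul_self_le_rpow_one_add (by linarith : (-1:ℝ) ≤ r - 1) hq1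
    have h2 : (1:ℝ) + (r - 1) = r := by ring
    rw [h2] at hb
    rw [hρqdef]
    nlinarith [hb]
  have hqε : (0:ℝ) < q * (1 - r) := mul_pos hq0 hε0
  have hSqlb : 1 / (q * (1 - r)) ≤ Sq := by
    have h2 : 1 / (q * (1 - r)) ≤ 1 / (1 - ρq) := one_div_le_one_div_of_le hρqpos hbern
    have h3 : 1 / (1 - ρq) ≤ Sq := by
      rw [hSqdef]
      gcongr <;> linarith
    linarith
  -- 1D edge sum
  have hEwsum : Summable fun k : ℤ => (wgeo r (k + 1) - wgeo r k) ^ 2 :=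
    Summable.of_nonneg_of_le (fun k => sq_nonneg _) (wgeo_edge_bound hr0 hr1)
      (hS2sum.mul_left _)
  have hEwle : (∑' k : ℤ, (wgeo r (k + 1) - wgeo r k) ^ 2) ≤ (1 - r) ^ 2 / r ^ 2 * S2 := by
    calc (∑' k : ℤ, (wgeo r (k + 1) - wgeo r k) ^ 2)
        ≤ ∑' k : ℤ, (1 - r) ^ 2 / r ^ 2 * wgeo r k ^ 2 :=
          Summable.tsum_le_tsum (wgeo_edge_bound hr0 hr1) hEwsum (hS2sum.mul_left _)
      _ = (1 - r) ^ 2 / r ^ 2 * S2 := by rw [tsum_mul_left, hS2val]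
  -- trial function
  have hS2dpos : (0:ℝ) < S2 ^ d := pow_pos hS2pos d
  set a : ℝ := Real.sqrt (β / S2 ^ d) with hadef
  have ha0 : 0 < a := Real.sqrt_pos.2 (div_pos hβ hS2dpos)
  have ha2 : a ^ 2 = β / S2 ^ d := Real.sq_sqrt (div_pos hβ hS2dpos).le
  set Φ : (Fin d → ℤ) → ℝ := fun n => a * ∏ i, wgeo r (n i) with hΦdef
  have hΦ0 : ∀ n, 0 < Φ n := fun n => mul_pos ha0 (Finset.prod_pos fun i _ => wgeo_pos hr0 _)
  set u : (Fin d → ℤ) → ℂ := fun n => ((Φ n : ℝ) : ℂ) with hudef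
  have hnorm : ∀ n, ‖u n‖ = Φ n := by
    intro n
    rw [hudef]
    simp only
    rw [Complex.norm_real, Real.norm_eq_abs, abs_of_nonneg (hΦ0 n).le]
  -- mass
  have hmass_eq : (fun n : Fin d → ℤ => ‖u n‖ ^ 2)
      = fun n => a ^ 2 * ∏ i, wgeo r (n i) ^ 2 := by
    funext n
    rw [hnorm n, hΦdef]
    simp only
    rw [mul_pow, Finset.prod_pow]
  have hmass_sum0 := tsum_pi_real (d := d) (fun _ k => wgeo r k ^ 2)
    (fun i k => sq_nonneg _) (fun i => hS2sum)
  have hmass_summable : Summable fun n : Fin d → ℤ => ‖u n‖ ^ 2 := by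
    rw [hmass_eq]; exact hmass_sum0.1.mul_left _
  have hS2dcancel : a ^ 2 * S2 ^ d = β := by
    rw [ha2, div_mul_cancel₀ _ (ne_of_gt hS2dpos)]
  have hmass_val : (∑' n : Fin d → ℤ, ‖u n‖ ^ 2) = β := by
    rw [hmass_eq, tsum_mul_left, hmass_sum0.2]
    simp_rw [hS2val]
    rw [Finset.prod_const, Finset.card_univ, Fintype.card_fin]
    exact hS2dcancel
  -- potential
  have hpot_eq : (fun n : Fin d → ℤ => ‖u n‖ ^ (2 * σ + 2))
      = fun n => a ^ q * ∏ i, wgeo r (n i) ^ q := by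
    funext n
    rw [hnorm n, hΦdef]
    simp only [← hqdef]
    rw [Real.mul_rpow ha0.le (Finset.prod_nonneg fun i _ => (wgeo_pos hr0 _).le),
      ← Real.finset_prod_rpow _ _ (fun i _ => (wgeo_pos hr0 _).le)]
  have hpot_sum0 := tsum_pi_real (d := d) (fun _ k => wgeo r k ^ q)
    (fun i k => Real.rpow_nonneg (wgeo_pos hr0 _).le q) (fun i => hSqsum)
  have hpot_val : (∑' n : Fin d → ℤ, ‖u n‖ ^ (2 * σ + 2)) = a ^ q * Sq ^ d := by
    rw [hpot_eq, tsum_mul_left, hpot_sum0.2]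
    simp_rw [hSqval]
    rw [Finset.prod_const, Finset.card_univ, Fintype.card_fin]
  -- edge sum bound
  have hedge : edgeSum d u ≤ 2 * d * β * ((1 - r) ^ 2 / r ^ 2) := by
    set fwd : Fin d → (Fin d → ℤ) → ℝ :=
      fun i n => ‖u (n + Pi.single i 1) - u n‖ ^ 2 with hfwddef
    set bwd : Fin d → (Fin d → ℤ) → ℝ :=
      fun i n => ‖u (n - Pi.single i 1) - u n‖ ^ 2 with hbwddef
    have hfwd_eq : ∀ i : Fin d, fwd i = fun n =>
        a ^ 2 * ∏ j, (if j = i then (wgeo r (n j + 1) - wgeo r (n j)) ^ 2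
          else wgeo r (n j) ^ 2) := by
      intro i
      funext n
      have hcast : u (n + Pi.single i 1) - u n = ((Φ (n + Pi.single i 1) - Φ n : ℝ) : ℂ) := by
        rw [hudef]; push_cast; ring
      rw [hfwddef]
      simp only
      rw [hcast, Complex.norm_real, Real.norm_eq_abs, sq_abs]
      have happ : (n + Pi.single i 1 : Fin d → ℤ) i = n i + 1 := by simp
      have hprod1 : (∏ j, wgeo r ((n + Pi.single i 1 : Fin d → ℤ) j))
          = wgeo r (n i + 1) * ∏ j ∈ Finset.univ.erase i, wgeo r (n j) := by
        rw [← Finset.mul_prod_erase Finset.univ _ (Finset.mem_univ i), happ]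
        congr 1
        refine Finset.prod_congr rfl (fun j hj => ?_)
        have hne : j ≠ i := (Finset.mem_erase.mp hj).1
        have : (n + Pi.single i 1 : Fin d → ℤ) j = n j := by simp [Pi.single_eq_of_ne hne]
        rw [this]
      have hprod2 : (∏ j, wgeo r (n j))
          = wgeo r (n i) * ∏ j ∈ Finset.univ.erase i, wgeo r (n j) :=
        (Finset.mul_prod_erase Finset.univ _ (Finset.mem_univ i)).symm
      have hprod3 : (∏ j, (if j = i then (wgeo r (n j + 1) - wgeo r (n j)) ^ 2
            else wgeo r (n j) ^ 2))
          = (wgeo r (n i + 1) - wgeo r (n i)) ^ 2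
            * ∏ j ∈ Finset.univ.erase i, wgeo r (n j) ^ 2 := by
        rw [← Finset.mul_prod_erase Finset.univ _ (Finset.mem_univ i), if_pos rfl]
        congr 1
        refine Finset.prod_congr rfl (fun j hj => ?_)
        rw [if_neg (Finset.mem_erase.mp hj).1]
      rw [hΦdef]
      simp only
      rw [hprod1, hprod2, hprod3, Finset.prod_pow]
      ring
    have hfs : ∀ i : Fin d, Summable (fun n : Fin d → ℤ =>
        ∏ j, (if j = i then (wgeo r (n j + 1) - wgeo r (n j)) ^ 2 else wgeo r (n j) ^ 2)) ∧
        (∑' n : Fin d → ℤ, ∏ j, (if j = i then (wgeo r (n j + 1) - wgeo r (n j)) ^ 2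
          else wgeo r (n j) ^ 2)) ≤ (1 - r) ^ 2 / r ^ 2 * S2 ^ d := by
      intro i
      have h0 := tsum_pi_real (d := d)
        (fun j k => if j = i then (wgeo r (k + 1) - wgeo r k) ^ 2 else wgeo r k ^ 2)
        (fun j k => by split <;> exact sq_nonneg _)
        (fun j => by
          by_cases h : j = i
          · simp only [h, if_true, eq_self_iff_true]; exact hEwsum
          · simp only [if_neg h]; exact hS2sum)
      refine ⟨h0.1, ?_⟩
      rw [h0.2]
      have hrest : ∀ j ∈ Finset.univ.erase i,
          (∑' k : ℤ, (if j = i then (wgeo r (k + 1) - wgeo r k) ^ 2 else wgeo r k ^ 2)) = S2 := by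
        intro j hj
        simp only [if_neg (Finset.mem_erase.mp hj).1]
        exact hS2val
      have hcard : (Finset.univ.erase i).card = d - 1 := by
        rw [Finset.card_erase_of_mem (Finset.mem_univ i), Finset.card_univ, Fintype.card_fin]
      rw [← Finset.mul_prod_erase Finset.univ _ (Finset.mem_univ i),
        Finset.prod_congr rfl hrest, Finset.prod_const, hcard]
      have hi : (∑' k : ℤ, (if i = i then (wgeo r (k + 1) - wgeo r k) ^ 2 else wgeo r k ^ 2))
          = ∑' k : ℤ, (wgeo r (k + 1) - wgeo r k) ^ 2 := by
        simp only [if_true, eq_self_iff_true]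
      rw [hi]
      have hS2dd : S2 * S2 ^ (d - 1) = S2 ^ d := by
        rw [← pow_succ']
        congr 1
        omega
      calc (∑' k : ℤ, (wgeo r (k + 1) - wgeo r k) ^ 2) * S2 ^ (d - 1)
          ≤ ((1 - r) ^ 2 / r ^ 2 * S2) * S2 ^ (d - 1) :=
            mul_le_mul_of_nonneg_right hEwle (pow_nonneg hS2pos.le _)
        _ = (1 - r) ^ 2 / r ^ 2 * (S2 * S2 ^ (d - 1)) := by ring
        _ = (1 - r) ^ 2 / r ^ 2 * S2 ^ d := by rw [hS2dd]
    have hfwd_sum : ∀ i : Fin d, Summable (fwd i) ∧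
        (∑' n : Fin d → ℤ, fwd i n) ≤ β * ((1 - r) ^ 2 / r ^ 2) := by
      intro i
      rw [hfwd_eq i]
      constructor
      · exact (hfs i).1.mul_left _
      · rw [tsum_mul_left]
        calc a ^ 2 * (∑' n : Fin d → ℤ, ∏ j, (if j = i then
              (wgeo r (n j + 1) - wgeo r (n j)) ^ 2 else wgeo r (n j) ^ 2))
            ≤ a ^ 2 * ((1 - r) ^ 2 / r ^ 2 * S2 ^ d) :=
              mul_le_mul_of_nonneg_left (hfs i).2 (sq_nonneg a)
          _ = (a ^ 2 * S2 ^ d) * ((1 - r) ^ 2 / r ^ 2) := by ring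
          _ = β * ((1 - r) ^ 2 / r ^ 2) := by rw [hS2dcancel]
    have hbwd_shift : ∀ i : Fin d, bwd i = fun n => fwd i (n - Pi.single i 1) := by
      intro i
      funext n
      rw [hbwddef, hfwddef]
      simp only
      rw [sub_add_cancel, norm_sub_rev]
    have hbwd_sum : ∀ i : Fin d, Summable (bwd i) ∧
        (∑' n : Fin d → ℤ, bwd i n) = ∑' n : Fin d → ℤ, fwd i n := by
      intro i
      rw [hbwd_shift i]
      constructor
      · exact (hfwd_sum i).1.comp_injective (sub_left_injective)
      · exact (Equiv.subRight (Pi.single i 1)).tsum_eq (fwd i)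
    have hedge_eq : edgeSum d u = ∑ i : Fin d, ((∑' n : Fin d → ℤ, fwd i n)
        + ∑' n : Fin d → ℤ, bwd i n) := by
      have h1 : edgeSum d u = ∑' n : Fin d → ℤ, ∑ i : Fin d, (fwd i n + bwd i n) := rfl
      rw [h1, Summable.tsum_finsetSum (fun i _ => ((hfwd_sum i).1.add (hbwd_sum i).1))]
      exact Finset.sum_congr rfl (fun i _ => Summable.tsum_add (hfwd_sum i).1 (hbwd_sum i).1)
    rw [hedge_eq]
    have hbound : ∀ i ∈ (Finset.univ : Finset (Fin d)),
        ((∑' n : Fin d → ℤ, fwd i n) + ∑' n : Fin d → ℤ, bwd i n)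
          ≤ 2 * (β * ((1 - r) ^ 2 / r ^ 2)) := by
      intro i _
      have h1 := (hfwd_sum i).2
      have h2 := (hbwd_sum i).2
      linarith
    calc (∑ i : Fin d, ((∑' n : Fin d → ℤ, fwd i n) + ∑' n : Fin d → ℤ, bwd i n))
        ≤ ∑ _i : Fin d, 2 * (β * ((1 - r) ^ 2 / r ^ 2)) := Finset.sum_le_sum hbound
      _ = d * (2 * (β * ((1 - r) ^ 2 / r ^ 2))) := by
          rw [Finset.sum_const, Finset.card_univ, Fintype.card_fin, nsmul_eq_mul]
      _ = 2 * d * β * ((1 - r) ^ 2 / r ^ 2) := by ring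
  -- potential lower bound
  have hpot_lb : β ^ (σ + 1) / (2 ^ ((d:ℝ) * (σ + 1)) * q ^ d) * (1 - r) ^ ((d:ℝ) * σ)
      ≤ a ^ q * Sq ^ d := by
    have hx0 : (0:ℝ) < β / S2 ^ d := div_pos hβ hS2dpos
    have haq : a ^ q = (β / S2 ^ d) ^ (σ + 1) := by
      rw [hadef, Real.sqrt_eq_rpow, ← Real.rpow_mul hx0.le,
        show (1/2 : ℝ) * q = σ + 1 by rw [hqdef]; ring]
    have h2 : (1 - r) * S2 ≤ 2 := by
      calc (1 - r) * S2 ≤ (1 - r) * (2 / (1 - r)) :=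
            mul_le_mul_of_nonneg_left hS2le hε0.le
        _ = 2 := by field_simp
    have hxlb : β * (1 - r) ^ d / 2 ^ d ≤ β / S2 ^ d := by
      rw [div_le_div_iff₀ (by positivity) hS2dpos]
      have h3 : ((1 - r) * S2) ^ d ≤ 2 ^ d :=
        pow_le_pow_left₀ (by positivity) h2 d
      calc β * (1 - r) ^ d * S2 ^ d = β * ((1 - r) * S2) ^ d := by
            rw [mul_pow]; ring
        _ ≤ β * 2 ^ d := mul_le_mul_of_nonneg_left h3 hβ.le
        _ = β * 2 ^ d := rfl
    have haq_lb : (β * (1 - r) ^ d / 2 ^ d) ^ (σ + 1) ≤ a ^ q := by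
      rw [haq]
      exact Real.rpow_le_rpow (by positivity) hxlb (by linarith)
    have hSqd_lb : (1 / (q * (1 - r))) ^ d ≤ Sq ^ d :=
      pow_le_pow_left₀ (by positivity) hSqlb d
    have haqnn : (0:ℝ) ≤ a ^ q := Real.rpow_nonneg ha0.le q
    have hcomb : (β * (1 - r) ^ d / 2 ^ d) ^ (σ + 1) * (1 / (q * (1 - r))) ^ d
        ≤ a ^ q * Sq ^ d :=
      mul_le_mul haq_lb hSqd_lb (by positivity) haqnn
    refine le_trans (le_of_eq ?_) hcomb
    rw [Real.div_rpow (by positivity) (by positivity),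
      Real.mul_rpow hβ.le (by positivity),
      ← Real.rpow_natCast_mul hε0.le d (σ + 1),
      ← Real.rpow_natCast_mul (by norm_num : (0:ℝ) ≤ 2) d (σ + 1),
      show (d:ℝ) * (σ + 1) = (d:ℝ) * σ + (d:ℝ) by ring,
      Real.rpow_add hε0 ((d:ℝ) * σ) ((d:ℝ)), Real.rpow_natCast]
    have hd1 : (0:ℝ) < (1 - r) ^ d := pow_pos hε0 d
    have hd2 : (0:ℝ) < q ^ d := pow_pos hq0 d
    have hd3 : (0:ℝ) < (2:ℝ) ^ ((d:ℝ) * σ + (d:ℝ)) := Real.rpow_pos_of_pos two_pos _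
    have hd4 : (0:ℝ) < (1 - r) ^ ((d:ℝ) * σ) := Real.rpow_pos_of_pos hε0 _
    rw [div_pow, one_pow, mul_pow]
    field_simp
  have hmem : dnlsH d σ u ∈ {x : ℝ | ∃ v : (Fin d → ℤ) → ℂ, Summable (fun n => ‖v n‖ ^ 2) ∧
      (∑' n : Fin d → ℤ, ‖v n‖ ^ 2) = β ∧ x = dnlsH d σ v} :=
    ⟨u, hmass_summable, hmass_val, rfl⟩
  have hle : hInf d σ β ≤ dnlsH d σ u := csInf_le (bddBelow_Hset d σ hσ0 β) hmem
  have hfinal : dnlsH d σ u ≤ 2 * d * β * ((1 - r) ^ 2 / r ^ 2)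
      - (1 / (σ + 1)) * (β ^ (σ + 1) / (2 ^ ((d:ℝ) * (σ + 1)) * q ^ d)
          * (1 - r) ^ ((d:ℝ) * σ)) := by
    have h1 : (0:ℝ) ≤ 1 / (σ + 1) := by positivity
    unfold dnlsH
    rw [hpot_val]
    have h2 := mul_le_mul_of_nonneg_left hpot_lb h1
    linarith [hedge]
  calc hInf d σ β ≤ dnlsH d σ u := hle
    _ ≤ _ := by rw [hqdef] at hfinal; exact hfinal

lemma hInf_neg (d : ℕ) (hd : 1 ≤ d) (σ : ℝ) (hσ0 : 0 < σ) (hσ : σ < 2 / d)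
    (β : ℝ) (hβ : 0 < β) : hInf d σ β < 0 := by
  have hd0 : (0:ℝ) < d := by exact_mod_cast Nat.pos_of_ne_zero (by omega)
  have hdσ : (d:ℝ) * σ < 2 := by
    rw [lt_div_iff₀ hd0] at hσ
    linarith [hσ]
  set p : ℝ := 2 - (d:ℝ) * σ with hpdef
  have hp : 0 < p := by rw [hpdef]; linarith
  set C0 : ℝ := β ^ (σ + 1) / (2 ^ ((d:ℝ) * (σ + 1)) * (2 * σ + 2) ^ d) with hC0def
  have hC0 : 0 < C0 := by
    apply div_pos (Real.rpow_pos_of_pos hβ _)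
    exact mul_pos (Real.rpow_pos_of_pos two_pos _) (pow_pos (by linarith) d)
  set K : ℝ := C0 / ((σ + 1) * (8 * d * β)) with hKdef
  have hK : 0 < K := div_pos hC0 (by positivity)
  set ε : ℝ := min (1/2) ((K/2) ^ (1/p)) with hεdef
  have hεpos : 0 < ε := lt_min (by norm_num) (Real.rpow_pos_of_pos (by linarith) _)
  have hεhalf : ε ≤ 1/2 := min_le_left _ _
  have hεp : ε ^ p ≤ K / 2 := by
    calc ε ^ p ≤ ((K/2) ^ (1/p)) ^ p :=
          Real.rpow_le_rpow hεpos.le (min_le_right _ _) hp.le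
      _ = K / 2 := by
          rw [← Real.rpow_mul (by linarith : (0:ℝ) ≤ K/2), one_div,
            inv_mul_cancel₀ (ne_of_gt hp), Real.rpow_one]
  set r : ℝ := 1 - ε with hrdef
  have hr : 1/2 ≤ r := by rw [hrdef]; linarith
  have hr1 : r < 1 := by rw [hrdef]; linarith
  have h1r : 1 - r = ε := by rw [hrdef]; ring
  have hb := trial_bound d hd σ β r hσ0 hβ hr hr1
  rw [h1r] at hb
  have hεdσ : (0:ℝ) < ε ^ ((d:ℝ) * σ) := Real.rpow_pos_of_pos hεpos _
  have hsq : ε ^ (2:ℕ) = ε ^ ((d:ℝ) * σ) * ε ^ p := by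
    rw [← Real.rpow_natCast ε 2, ← Real.rpow_add hεpos]
    congr 1
    rw [hpdef]; push_cast; ring
  have hr2 : ε ^ 2 / r ^ 2 ≤ 4 * ε ^ 2 := by
    have h4r : (1:ℝ) ≤ 4 * r ^ 2 := by nlinarith [hr]
    rw [div_le_iff₀ (by positivity : (0:ℝ) < r ^ 2)]
    nlinarith [mul_nonneg (sq_nonneg ε) (sub_nonneg.2 h4r)]
  have hmain : 2 * (d:ℝ) * β * (ε ^ 2 / r ^ 2)
      < 1 / (σ + 1) * (C0 * ε ^ ((d:ℝ) * σ)) := by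
    have h7 : ε ^ p < K := lt_of_le_of_lt hεp (by linarith)
    have h8 : 8 * (d:ℝ) * β * ε ^ ((d:ℝ)*σ) * ε ^ p < 8 * (d:ℝ) * β * ε ^ ((d:ℝ)*σ) * K :=
      mul_lt_mul_of_pos_left h7 (by positivity)
    have h9 : 8 * (d:ℝ) * β * ε ^ ((d:ℝ)*σ) * K = 1 / (σ + 1) * (C0 * ε ^ ((d:ℝ)*σ)) := by
      rw [hKdef]; field_simp
    calc 2 * (d:ℝ) * β * (ε ^ 2 / r ^ 2) ≤ 2 * (d:ℝ) * β * (4 * ε ^ 2) :=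
          mul_le_mul_of_nonneg_left hr2 (by positivity)
      _ = 8 * (d:ℝ) * β * ε ^ ((d:ℝ)*σ) * ε ^ p := by rw [hsq]; ring
      _ < 8 * (d:ℝ) * β * ε ^ ((d:ℝ)*σ) * K := h8
      _ = 1 / (σ + 1) * (C0 * ε ^ ((d:ℝ)*σ)) := h9
  linarith [hb, hmain]


lemma hInf_strict_piece (d : ℕ) (hd : 1 ≤ d) (σ : ℝ) (hσ0 : 0 < σ) (hσ : σ < 2 / d)
    {β lam : ℝ} (hβ : 0 < β) (hlt : β < lam) :
    (β / lam) * hInf d σ lam < hInf d σ β := by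
  have hlam : 0 < lam := lt_trans hβ hlt
  have hneg := hInf_neg d hd σ hσ0 hσ β hβ
  have hs1 : 1 < lam / β := (one_lt_div hβ).2 hlt
  have hpow : lam / β < (lam / β) ^ (σ + 1) := by
    calc lam / β = (lam / β) ^ (1:ℝ) := (Real.rpow_one _).symm
      _ < (lam / β) ^ (σ + 1) := Real.rpow_lt_rpow_of_exponent_lt hs1 (by linarith)
  have h1 : hInf d σ lam < (lam / β) * hInf d σ β := by
    have hle := hInf_le_scale d σ hσ0 hβ hlt
    nlinarith
  have h := mul_lt_mul_of_pos_left h1 (div_pos hβ hlam)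
  have heq : (β / lam) * ((lam / β) * hInf d σ β) = hInf d σ β := by field_simp
  rw [heq] at h
  exact h

/-- for `d ≥ 1`, `0 < σ < 2/d`, the function `h` is strictly sublinear:
for every `λ > 0` and `α ∈ (0, λ)`, `h(λ) < h(α) + h(λ - α)`. -/
theorem hInf_strict_subadditive (d : ℕ) (hd : 1 ≤ d) (σ : ℝ) (hσ0 : 0 < σ)
    (hσ : σ < 2 / d) (lam : ℝ) (hlam : 0 < lam) (α : ℝ) (hα : α ∈ Set.Ioo 0 lam) :
    hInf d σ lam < hInf d σ α + hInf d σ (lam - α) := by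
  obtain ⟨hα0, hαlam⟩ := hα
  have h1 := hInf_strict_piece d hd σ hσ0 hσ hα0 hαlam
  have h2 := hInf_strict_piece d hd σ hσ0 hσ (show 0 < lam - α by linarith)
    (show lam - α < lam by linarith)
  have : (α / lam) * hInf d σ lam + ((lam - α) / lam) * hInf d σ lam = hInf d σ lam := by
    field_simp; ring
  linarith
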